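/- arXiv:1810.10570 — 2 statements merged into one kernel-verified Lean document; each statement's English description precedes it below -/
import Mathlib

section
/- Let (R, m) be a Noetherian local ring, let I be an ideal of R of finite colength, and let f ∈ R be an element with r_f(I) < ∞. Then ℓ(R/I) ≤ r_f(I) · ℓ(R/(⟨f⟩ + I)); equivalently, the quotient ℓ(R/I) / ℓ(R/(⟨f⟩ + I)) is at most r_f(I). -/
/-- The length of an `R`-module `M`: the supremum of lengths of strictly increasing
chains of submodules of `M` (i.e. the Krull dimension of the submodule lattice),
viewed in `ℕ∞`. -/
noncomputable def moduleLength (R M : Type*) [Ring R] [AddCommGroup M] [Module R M] : ℕ∞ :=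
  WithBot.unbotD 0 (Order.krullDim (Submodule R M))

/-!
Let `r = r_f(I)`. The map `J ↦ (⟨f⟩ + (J : f^k))_{0 ≤ k < r}` from ideals containing `I` to
`r`-tuples of ideals containing `⟨f⟩ + I` is strictly monotone: if `J ⊆ J'` have the same image,
a descending induction on `k`, starting from `(J : f^r) = R`, gives `(J' : f^k) ⊆ (J : f^k)`,
and `k = 0` gives `J' = J`. Each step of a strict chain of tuples strictly raises some coordinate,
so `ℓ(R/I) = coheight I ≤ ∑ₖ coheight (⟨f⟩ + (I : f^k)) ≤ r · coheight (⟨f⟩ + I)`,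
which is `r · ℓ(R/(⟨f⟩ + I))`.
-/

lemma moduleLength_eq_length (R M : Type*) [Ring R] [AddCommGroup M] [Module R M] :
    moduleLength R M = Module.length R M := by
  rw [moduleLength, ← Module.coe_length, WithBot.unbotD_coe]

namespace Order

variable {α : Type*} [Preorder α]

lemma coheight_coe_Ici {a : α} (x : Set.Ici a) : coheight (x : α) = coheight x :=
  (coheight_eq_of_strictMono Subtype.val (fun _ _ h ↦ h)
    (fun y b hyb ↦ ⟨⟨b, y.2.trans hyb.le⟩, hyb, rfl⟩) x).symm

variable {ι : Type*} [Fintype ι]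

lemma sum_coheight_add_one_le_of_lt {x y : ι → α} (hxy : x < y) :
    ∑ i, coheight (y i) + 1 ≤ ∑ i, coheight (x i) := by
  classical
  obtain ⟨hle, i₀, hi₀⟩ := Pi.lt_def.1 hxy
  rw [← Finset.add_sum_erase _ _ (Finset.mem_univ i₀),
    ← Finset.add_sum_erase _ (fun i ↦ coheight (x i)) (Finset.mem_univ i₀), add_right_comm]
  exact add_le_add (coheight_add_one_le hi₀)
    (Finset.sum_le_sum fun i _ ↦ coheight_anti (hle i))

lemma _root_.LTSeries.length_le_sum_coheight_head (p : LTSeries (ι → α)) :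
    p.length ≤ ∑ i, coheight (p.head i) := by
  induction p using RelSeries.inductionOn with
  | singleton => simp
  | cons p y hy ih =>
    rw [RelSeries.cons_length, RelSeries.head_cons, Nat.cast_add, Nat.cast_one]
    exact (add_le_add_left ih 1).trans (sum_coheight_add_one_le_of_lt hy)

lemma coheight_le_sum_coheight_apply (x : ι → α) : coheight x ≤ ∑ i, coheight (x i) :=
  coheight_le fun p hp ↦ hp ▸ p.length_le_sum_coheight_head

end Order

namespace Ideal

variable {R : Type*} [CommRing R] {J J' : Ideal R} {f : R}

lemma mem_colon_singleton_iff_mul_mem {x y : R} : x ∈ J.colon {y} ↔ y * x ∈ J := by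
  rw [Submodule.mem_colon_singleton, smul_eq_mul, mul_comm]

lemma colon_pow_le_of_colon_pow_succ_le (hJJ' : J ≤ J') {k : ℕ}
    (hsup : J'.colon {f ^ k} ≤ span {f} ⊔ J.colon {f ^ k})
    (hsucc : J'.colon {f ^ (k + 1)} ≤ J.colon {f ^ (k + 1)}) :
    J'.colon {f ^ k} ≤ J.colon {f ^ k} := by
  intro a ha
  obtain ⟨u, hu, b, hb, rfl⟩ := Submodule.mem_sup.1 (hsup ha)
  obtain ⟨t, rfl⟩ := mem_span_singleton'.1 hu
  rw [mem_colon_singleton_iff_mul_mem] at ha hb ⊢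
  have hft : f ^ (k + 1) * t ∈ J' := by
    convert J'.sub_mem ha (hJJ' hb) using 1
    ring
  have hft' : f ^ (k + 1) * t ∈ J :=
    mem_colon_singleton_iff_mul_mem.1 (hsucc (mem_colon_singleton_iff_mul_mem.2 hft))
  convert J.add_mem hft' hb using 1
  ring

lemma le_of_colon_pow_le_sup_span (hJJ' : J ≤ J') {r : ℕ} (hr : f ^ r ∈ J)
    (hsup : ∀ k < r, J'.colon {f ^ k} ≤ span {f} ⊔ J.colon {f ^ k}) : J' ≤ J := by
  have hcolon : ∀ k ≤ r, J'.colon {f ^ k} ≤ J.colon {f ^ k} := fun k hk ↦ by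
    induction hk using Nat.decreasingInduction with
    | self => exact fun x _ ↦ mem_colon_singleton_iff_mul_mem.2 (J.mul_mem_right x hr)
    | of_succ k hk ih => exact colon_pow_le_of_colon_pow_succ_le hJJ' (hsup k hk) ih
  simpa [mem_colon_singleton_iff_mul_mem, SetLike.le_def] using hcolon 0 r.zero_le

lemma strictMono_sup_span_colon_pow {I : Ideal R} {r : ℕ} (hr : f ^ r ∈ I) :
    StrictMono fun (J : Set.Ici I) (k : Fin r) ↦
      span {f} ⊔ (J : Ideal R).colon {f ^ (k : ℕ)} := by
  intro J J' hJJ'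
  refine lt_of_le_of_ne (fun k ↦ sup_le_sup_left (Submodule.colon_mono hJJ'.le le_rfl) _)
    fun heq ↦ hJJ'.not_ge ?_
  refine le_of_colon_pow_le_sup_span hJJ'.le (J.2 hr) fun k hk ↦ ?_
  exact le_sup_right.trans (congrFun heq ⟨k, hk⟩).ge

end Ideal

theorem length_quotient_le_rootIndex_mul_general
    (R : Type*) [CommRing R]
    (I : Ideal R)
    (f : R) (hf : ∃ r : ℕ, 0 < r ∧ f ^ r ∈ I) :
    moduleLength R (R ⧸ I) ≤
      ((sInf {r : ℕ | 0 < r ∧ f ^ r ∈ I} : ℕ) : ℕ∞) *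
        moduleLength R (R ⧸ (Ideal.span {f} + I)) := by
  set r := sInf {r : ℕ | 0 < r ∧ f ^ r ∈ I}
  have hr : f ^ r ∈ I := (Nat.sInf_mem hf).2
  rw [moduleLength_eq_length, moduleLength_eq_length, Module.length_quotient,
    Module.length_quotient, Submodule.add_eq_sup]
  calc Order.coheight I = Order.coheight (⟨I, le_refl I⟩ : Set.Ici I) :=
        Order.coheight_coe_Ici (α := Ideal R) ⟨I, le_refl I⟩
    _ ≤ Order.coheight fun k : Fin r ↦ Ideal.span {f} ⊔ I.colon {f ^ (k : ℕ)} :=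
        Order.coheight_le_coheight_apply_of_strictMono _ (Ideal.strictMono_sup_span_colon_pow hr) _
    _ ≤ ∑ k : Fin r, Order.coheight (Ideal.span {f} ⊔ I.colon {f ^ (k : ℕ)}) :=
        Order.coheight_le_sum_coheight_apply _
    _ ≤ ∑ _k : Fin r, Order.coheight (Ideal.span {f} ⊔ I) :=
        Finset.sum_le_sum fun k _ ↦ Order.coheight_anti (sup_le_sup_left Ideal.le_colon _)
    _ = r * Order.coheight (Ideal.span {f} ⊔ I) := by simp

/-- **Theorem (bound for the quotient of colengths).**
Let `(R, m)` be a Noetherian local ring, `I` an ideal of finite colength, and `f ∈ R` with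
`r_f(I) < ∞` (i.e. `f ^ r ∈ I` for some `r ≥ 1`).  Then
`ℓ(R/I) ≤ r_f(I) · ℓ(R/(⟨f⟩ + I))`. -/
theorem length_quotient_le_rootIndex_mul
    (R : Type*) [CommRing R] [IsNoetherianRing R] [IsLocalRing R]
    (I : Ideal R) (hI : moduleLength R (R ⧸ I) ≠ ⊤)
    (f : R) (hf : ∃ r : ℕ, 0 < r ∧ f ^ r ∈ I) :
    moduleLength R (R ⧸ I) ≤
      ((sInf {r : ℕ | 0 < r ∧ f ^ r ∈ I} : ℕ) : ℕ∞) *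
        moduleLength R (R ⧸ (Ideal.span {f} + I)) :=
  length_quotient_le_rootIndex_mul_general R I f hf
end

section
/- Let R be a commutative ring, let I be an ideal of R, let f ∈ R, let φ_{f,I} : R/I → R/I be multiplication by f, and let i be a positive integer. Writing J_i = (⟨f^i⟩ + I)/I ⊆ R/I, the sequence 0 → ker(φ_{f,I}) ∩ J_i → J_i → J_i → (⟨f^i⟩ + I)/(⟨f^{i+1}⟩ + I) → 0 is exact, where the first map is the inclusion, the second is the restriction of φ_{f,I} (which maps J_i into J_i), and the third is the natural projection. -/
/-! The last map is the restriction to `J_i` of the projection `q : R/I → R/(⟨f^{i+1}⟩ + I)`,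
whose kernel is the image of `⟨f^{i+1}⟩` in `R/I`. Since `φ_{f,I}` maps `J_i` onto exactly that
image, `ker q ∩ J_i = φ_{f,I}(J_i)`, which is exactness at the second `J_i`; surjectivity holds
because `I` dies in the target. Exactness at the first `J_i` only uses that the middle map is a
restriction of `φ_{f,I}`. -/

open Submodule

section RestrictedSequence

variable {R M M' Q : Type*} [Semiring R] [AddCommMonoid M] [AddCommMonoid M'] [AddCommMonoid Q]
  [Module R M] [Module R M'] [Module R Q]

theorem injective_of_forall_coe_apply_eq {N N' : Submodule R M} (ι : N → N')
    (hι : ∀ x, (ι x : M) = x) : Function.Injective ι :=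
  fun x y hxy => Subtype.ext <| (hι x).symm.trans <| (congrArg Subtype.val hxy).trans (hι y)

theorem exact_inclusion_ker_inf_restrict (φ : M →ₗ[R] M') (N : Submodule R M)
    (N' : Submodule R M') (ι : ↥(LinearMap.ker φ ⊓ N) → N) (hι : ∀ x, (ι x : M) = x)
    (φ' : N → N') (hφ' : ∀ x, (φ' x : M') = φ x) : Function.Exact ι φ' := by
  intro y
  constructor
  · intro hy
    have hφy : φ y = 0 := by rw [← hφ', hy]; rfl
    exact ⟨⟨y, hφy, y.2⟩, Subtype.ext (hι _)⟩
  · rintro ⟨z, rfl⟩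
    exact Subtype.ext <| (hφ' _).trans <| (congrArg φ (hι z)).trans z.2.1

theorem exact_restrict_of_ker_inf_eq_map (φ : M →ₗ[R] M') (q : M' →ₗ[R] Q)
    (N : Submodule R M) (N' : Submodule R M') (P : Submodule R Q)
    (φ' : N → N') (hφ' : ∀ x, (φ' x : M') = φ x)
    (π : N' → P) (hπ : ∀ y, (π y : Q) = q y)
    (h : LinearMap.ker q ⊓ N' = N.map φ) : Function.Exact φ' π := by
  intro y
  have hπy : π y = 0 ↔ (y : M') ∈ N.map φ := by
    rw [← h, Subtype.ext_iff, hπ]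
    exact ⟨fun hy => ⟨hy, y.2⟩, fun hy => hy.1⟩
  rw [hπy]
  constructor
  · rintro ⟨x, hx, hxy⟩
    exact ⟨⟨x, hx⟩, Subtype.ext ((hφ' _).trans hxy)⟩
  · rintro ⟨x, rfl⟩
    exact ⟨x, x.2, (hφ' x).symm⟩

theorem surjective_of_le_map (q : M' →ₗ[R] Q) (N' : Submodule R M') (P : Submodule R Q)
    (π : N' → P) (hπ : ∀ y, (π y : Q) = q y) (h : P ≤ N'.map q) :
    Function.Surjective π := by
  intro z
  obtain ⟨y, hy, hyz⟩ := h z.2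
  exact ⟨⟨y, hy⟩, Subtype.ext ((hπ _).trans hyz)⟩

end RestrictedSequence

namespace Submodule

variable {R M : Type*} [Ring R] [AddCommGroup M] [Module R M]

theorem ker_factor {p p' : Submodule R M} (H : p ≤ p') :
    LinearMap.ker (factor H) = p'.map p.mkQ := by
  rw [factor, ker_mapQ, comap_id]

theorem map_mkQ_sup_of_le {p p' p'' : Submodule R M} (h : p'' ≤ p) :
    (p' ⊔ p'').map p.mkQ = p'.map p.mkQ := by
  rw [map_sup, eq_bot_iff.mpr ((map_mono h).trans (mkQ_map_self p).le), sup_bot_eq]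

end Submodule

theorem map_map_mkQ_span_singleton {R : Type*} [CommRing R] {I : Ideal R} {f : R}
    {φ : (R ⧸ I) →ₗ[R] (R ⧸ I)}
    (hφ : ∀ g : R, φ (Ideal.Quotient.mk I g) = Ideal.Quotient.mk I (f * g)) (a : R) :
    map φ (map I.mkQ (Ideal.span {a})) = map I.mkQ (Ideal.span {f * a}) := by
  have hcomp : φ ∘ₗ I.mkQ = I.mkQ ∘ₗ LinearMap.mulLeft R f := LinearMap.ext hφ
  rw [← map_comp, hcomp, map_comp, Ideal.span, map_span, Set.image_singleton]
  rfl

theorem exact_ker_inter_restricted_general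
    (R : Type*) [CommRing R] (I : Ideal R) (f : R) (i : ℕ)
    (φ : (R ⧸ I) →ₗ[R] (R ⧸ I))
    (hφ : ∀ g : R, φ (Ideal.Quotient.mk I g) = Ideal.Quotient.mk I (f * g))
    (ι : (LinearMap.ker φ ⊓ Submodule.map I.mkQ (Ideal.span {f ^ i}) : Submodule R (R ⧸ I)) →ₗ[R]
        Submodule.map I.mkQ (Ideal.span {f ^ i}))
    (hι : ∀ x : (LinearMap.ker φ ⊓ Submodule.map I.mkQ (Ideal.span {f ^ i}) : Submodule R (R ⧸ I)),
        (ι x : R ⧸ I) = (x : R ⧸ I))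
    (φ' : Submodule.map I.mkQ (Ideal.span {f ^ i}) →ₗ[R] Submodule.map I.mkQ (Ideal.span {f ^ i}))
    (hφ' : ∀ x : Submodule.map I.mkQ (Ideal.span {f ^ i}), (φ' x : R ⧸ I) = φ (x : R ⧸ I))
    (π : Submodule.map I.mkQ (Ideal.span {f ^ i}) →ₗ[R]
        Submodule.map (Ideal.span {f ^ (i + 1)} + I).mkQ (Ideal.span {f ^ i} + I))
    (hπ : ∀ (g : R) (hg : Ideal.Quotient.mk I g ∈ Submodule.map I.mkQ (Ideal.span {f ^ i})),
        (π ⟨Ideal.Quotient.mk I g, hg⟩ : R ⧸ (Ideal.span {f ^ (i + 1)} + I)) =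
          Ideal.Quotient.mk (Ideal.span {f ^ (i + 1)} + I) g) :
    Function.Injective ι ∧ Function.Exact ι φ' ∧ Function.Exact φ' π ∧ Function.Surjective π := by
  have hIle : I ≤ Ideal.span {f ^ (i + 1)} + I := le_sup_right
  have hπq : ∀ y, (π y : R ⧸ (Ideal.span {f ^ (i + 1)} + I)) = factor hIle y := by
    rintro ⟨y, hy⟩
    obtain ⟨g, rfl⟩ := Ideal.Quotient.mk_surjective y
    exact hπ g hy
  have hφJ : map φ (map I.mkQ (Ideal.span {f ^ i})) = map I.mkQ (Ideal.span {f ^ (i + 1)}) := by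
    rw [map_map_mkQ_span_singleton hφ, pow_succ']
  have hJ : map I.mkQ (Ideal.span {f ^ (i + 1)}) ≤ map I.mkQ (Ideal.span {f ^ i}) :=
    map_mono (Ideal.span_singleton_le_span_singleton.mpr (pow_dvd_pow f i.le_succ))
  refine ⟨injective_of_forall_coe_apply_eq ι hι,
    exact_inclusion_ker_inf_restrict φ _ _ ι hι φ' hφ',
    exact_restrict_of_ker_inf_eq_map φ (factor hIle) _ _ _ φ' hφ' π hπq ?_,
    surjective_of_le_map (factor hIle) _ _ π hπq ?_⟩
  · rw [ker_factor, Submodule.add_eq_sup, map_mkQ_sup_of_le le_rfl, hφJ, inf_eq_left.mpr hJ]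
  · rw [← map_comp, factor_comp_mk]
    exact (map_mkQ_sup_of_le hIle).le

/-- **The restricted exact sequence.**
Let `R` be a commutative ring, `I` an ideal of `R`, `f ∈ R`, let
`φ_{f,I} : R/I → R/I` be multiplication by `f`, and let `i ≥ 1`.  Writing
`J_i = (⟨f^i⟩ + I)/I ⊆ R/I` (the image in `R/I` of the ideal generated by `f^i`), the sequence
`0 → ker(φ_{f,I}) ∩ J_i → J_i → J_i → (⟨f^i⟩ + I)/(⟨f^{i+1}⟩ + I) → 0`
is exact, where the first map is the inclusion, the second is the restriction of `φ_{f,I}`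
(which maps `J_i` into `J_i`), and the third is the natural projection (onto the image of
the ideal `⟨f^i⟩ + I` in `R/(⟨f^{i+1}⟩ + I)`). -/
theorem exact_ker_inter_restricted
    (R : Type*) [CommRing R] (I : Ideal R) (f : R) (i : ℕ) (hi : 0 < i)
    (φ : (R ⧸ I) →ₗ[R] (R ⧸ I))
    (hφ : ∀ g : R, φ (Ideal.Quotient.mk I g) = Ideal.Quotient.mk I (f * g))
    (ι : (LinearMap.ker φ ⊓ Submodule.map I.mkQ (Ideal.span {f ^ i}) : Submodule R (R ⧸ I)) →ₗ[R]
        Submodule.map I.mkQ (Ideal.span {f ^ i}))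
    (hι : ∀ x : (LinearMap.ker φ ⊓ Submodule.map I.mkQ (Ideal.span {f ^ i}) : Submodule R (R ⧸ I)),
        (ι x : R ⧸ I) = (x : R ⧸ I))
    (φ' : Submodule.map I.mkQ (Ideal.span {f ^ i}) →ₗ[R] Submodule.map I.mkQ (Ideal.span {f ^ i}))
    (hφ' : ∀ x : Submodule.map I.mkQ (Ideal.span {f ^ i}), (φ' x : R ⧸ I) = φ (x : R ⧸ I))
    (π : Submodule.map I.mkQ (Ideal.span {f ^ i}) →ₗ[R]
        Submodule.map (Ideal.span {f ^ (i + 1)} + I).mkQ (Ideal.span {f ^ i} + I))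
    (hπ : ∀ (g : R) (hg : Ideal.Quotient.mk I g ∈ Submodule.map I.mkQ (Ideal.span {f ^ i})),
        (π ⟨Ideal.Quotient.mk I g, hg⟩ : R ⧸ (Ideal.span {f ^ (i + 1)} + I)) =
          Ideal.Quotient.mk (Ideal.span {f ^ (i + 1)} + I) g) :
    Function.Injective ι ∧ Function.Exact ι φ' ∧ Function.Exact φ' π ∧ Function.Surjective π :=
  exact_ker_inter_restricted_general R I f i φ hφ ι hι φ' hφ' π hπ
end
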